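/- Let H be the graph consisting of a path u₁u₂u₃u₄u₅ together with a pendant vertex u₃' adjacent to u₃, with the 2-distance constraint. Suppose |L(u₁)| ≥ 2, |L(u₂)| ≥ 3, |L(u₃)| ≥ 3, |L(u₄)| ≥ 4, |L(u₅)| ≥ 2, |L(u₃')| ≥ 2. Then H admits a 2-distance list coloring. -/
import Mathlib


open SimpleGraph

/-- A 2-distance list coloring of the path `u₁ ⋯ uₙ`: each vertex gets a color from its
list and vertices at distance at most 2 on the path get distinct colors. -/
def PathColoring {n : ℕ} {α : Type*} (L : Fin n → Finset α) (φ : Fin n → α) : Prop :=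
  (∀ i, φ i ∈ L i) ∧ ∀ i j : Fin n, i.val < j.val → j.val ≤ i.val + 2 → φ i ≠ φ j

set_option linter.unusedSectionVars false

section Helpers
variable {α : Type*} [DecidableEq α]

lemma pick_avoid (s t : Finset α) (h : t.card < s.card) : ∃ x ∈ s, x ∉ t := by
  by_contra hc
  push_neg at hc
  exact absurd (Finset.card_le_card hc) (by omega)

lemma pick1 (s : Finset α) (x : α) (h : 1 < s.card) : ∃ u ∈ s, u ≠ x := by
  obtain ⟨u, hu, hn⟩ := pick_avoid s {x} (by simpa using h)
  exact ⟨u, hu, by simpa using hn⟩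

lemma pick2 (s : Finset α) (x y : α) (h : 2 < s.card) : ∃ u ∈ s, u ≠ x ∧ u ≠ y := by
  obtain ⟨u, hu, hn⟩ := pick_avoid s {x, y} (lt_of_le_of_lt (by
    apply le_trans (Finset.card_insert_le _ _); simp) h)
  simp only [Finset.mem_insert, Finset.mem_singleton, not_or] at hn
  exact ⟨u, hu, hn⟩

lemma pick3 (s : Finset α) (x y z : α) (h : 3 < s.card) : ∃ u ∈ s, u ≠ x ∧ u ≠ y ∧ u ≠ z := by
  obtain ⟨u, hu, hn⟩ := pick_avoid s {x, y, z} (lt_of_le_of_lt (by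
    apply le_trans (Finset.card_insert_le _ _)
    have := Finset.card_insert_le y ({z} : Finset α)
    simp at this ⊢; omega) h)
  simp only [Finset.mem_insert, Finset.mem_singleton, not_or] at hn
  exact ⟨u, hu, hn.1, hn.2.1, hn.2.2⟩

lemma triangle (X Y Z : Finset α) (hX : X.card = 2) (hY : 2 ≤ Y.card) (hZ : 2 ≤ Z.card) :
    (∃ x ∈ X, ∃ y ∈ Y, ∃ z ∈ Z, x ≠ y ∧ x ≠ z ∧ y ≠ z) ∨ (X = Y ∧ X = Z) := by
  by_cases h : ∃ x ∈ X, ∃ y ∈ Y, ∃ z ∈ Z, x ≠ y ∧ x ≠ z ∧ y ≠ z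
  · exact Or.inl h
  push_neg at h
  -- h : ∀ x ∈ X, ∀ y ∈ Y, ∀ z ∈ Z, x ≠ y → x ≠ z → y = z
  right
  obtain ⟨z1, hz1⟩ : Z.Nonempty := Finset.card_pos.mp (by omega)
  obtain ⟨y1, hy1, hy1z1⟩ := pick1 Y z1 (by omega)
  have hXsub : ∀ y ∈ Y, ∀ z ∈ Z, y ≠ z → X ⊆ {y, z} := by
    intro y hy z hz hyz x hx
    rcases eq_or_ne x y with rfl | hxy
    · simp
    rcases eq_or_ne x z with rfl | hxz
    · simp
    exact absurd (h x hx y hy z hz hxy hxz) hyz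
  have hXeq : X = {y1, z1} := by
    apply Finset.eq_of_subset_of_card_le (hXsub y1 hy1 z1 hz1 hy1z1)
    rw [hX]; apply le_trans (Finset.card_insert_le _ _); simp
  have hYX : Y ⊆ X := by
    intro y hy
    rcases eq_or_ne y z1 with rfl | hyz
    · rw [hXeq]; simp
    have := hXsub y hy z1 hz1 hyz
    have hy1m : y1 ∈ ({y, z1} : Finset α) := this (by rw [hXeq]; simp)
    simp only [Finset.mem_insert, Finset.mem_singleton] at hy1m
    rcases hy1m with rfl | h'
    · rw [hXeq]; simp
    · exact absurd h' hy1z1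
  have hZX : Z ⊆ X := by
    intro z hz
    rcases eq_or_ne z y1 with rfl | hzy
    · rw [hXeq]; simp
    have : X ⊆ {y1, z} := by
      intro x hx
      rcases eq_or_ne x y1 with rfl | hxy
      · simp
      rcases eq_or_ne x z with rfl | hxz
      · simp
      exact absurd (h x hx y1 hy1 z hz hxy hxz) (Ne.symm hzy)
    have hz1m : z1 ∈ ({y1, z} : Finset α) := this (by rw [hXeq]; simp)
    simp only [Finset.mem_insert, Finset.mem_singleton] at hz1m
    rcases hz1m with h' | rfl
    · exact absurd h' (Ne.symm hy1z1)
    · rw [hXeq]; simp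
  constructor
  · exact (Finset.eq_of_subset_of_card_le hYX (by omega)).symm
  · exact (Finset.eq_of_subset_of_card_le hZX (by omega)).symm

end Helpers
section H2
variable {α : Type*} [DecidableEq α]

lemma buildPC (L : Fin 5 → Finset α) (x0 x1 x2 x3 x4 : α)
    (m0 : x0 ∈ L 0) (m1 : x1 ∈ L 1) (m2 : x2 ∈ L 2) (m3 : x3 ∈ L 3) (m4 : x4 ∈ L 4)
    (h01 : x0 ≠ x1) (h02 : x0 ≠ x2) (h12 : x1 ≠ x2) (h13 : x1 ≠ x3)
    (h23 : x2 ≠ x3) (h24 : x2 ≠ x4) (h34 : x3 ≠ x4) :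
    PathColoring L ![x0, x1, x2, x3, x4] := by
  constructor
  · intro i; fin_cases i <;> simpa
  · intro i j hij hj
    fin_cases i <;> fin_cases j <;> simp_all <;> omega

lemma pick_ed (D E : Finset α) (cD : D.card = 4) (cE : E.card = 2) (b c2 f : α)
    (hb : b ∉ E) (hc : c2 ∉ E) (hf : f ∉ E) :
    ∃ e ∈ E, ∃ d ∈ D, d ≠ b ∧ d ≠ c2 ∧ d ≠ f ∧ d ≠ e ∧ e ≠ c2 := by
  obtain ⟨e1, he1, e2, he2, hne⟩ := Finset.one_lt_card.mp (by omega : 1 < E.card)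
  by_cases hD : e2 ∈ D
  · exact ⟨e1, he1, e2, hD, fun h => hb (h ▸ he2), fun h => hc (h ▸ he2),
      fun h => hf (h ▸ he2), Ne.symm hne, fun h => hc (h ▸ he1)⟩
  · obtain ⟨d, hd, hdb, hdc, hdf⟩ := by
      apply pick3 D b c2 f
      omega
    exact ⟨e2, he2, d, hd, hdb, hdc, hdf, fun h => hD (h ▸ hd), fun h => hc (h ▸ he2)⟩

lemma attempt (A B F : Finset α) (cA : A.card = 2) (cB : B.card = 3) (cF : F.card = 2)
    (c2 : α) :
    (∃ f ∈ F, f ≠ c2 ∧ ∃ b ∈ B, b ≠ c2 ∧ b ≠ f ∧ ∃ a ∈ A, a ≠ b ∧ a ≠ c2)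
    ∨ (∃ g b1, c2 ≠ g ∧ c2 ≠ b1 ∧ g ≠ b1 ∧ F = {c2, g} ∧ B = {c2, g, b1} ∧ A = {c2, b1}) := by
  by_cases h : ∃ f ∈ F, f ≠ c2 ∧ ∃ b ∈ B, b ≠ c2 ∧ b ≠ f ∧ ∃ a ∈ A, a ≠ b ∧ a ≠ c2
  · exact Or.inl h
  push_neg at h
  right
  -- h : ∀ f ∈ F, f ≠ c2 → ∀ b ∈ B, b ≠ c2 → b ≠ f → ∀ a ∈ A, a ≠ b → a = c2
  obtain ⟨f0, hf0, hf0c⟩ := pick1 F c2 (by omega)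
  obtain ⟨b1, hb1, hb1c, hb1f⟩ := pick2 B c2 f0 (by omega)
  have hAsub : ∀ b ∈ B, b ≠ c2 → b ≠ f0 → A ⊆ {c2, b} := by
    intro b hb hbc hbf a ha
    rcases eq_or_ne a b with rfl | hab
    · simp
    · simp [h f0 hf0 hf0c b hb hbc hbf a ha hab]
  have hAeq : A = {c2, b1} := by
    apply Finset.eq_of_subset_of_card_le
    · intro a ha
      have := hAsub b1 hb1 hb1c hb1f ha
      simpa using this
    · rw [cA]; apply le_trans (Finset.card_insert_le _ _); simp
  have hb1A : b1 ∈ A := by rw [hAeq]; simp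
  have hbforce : ∀ b ∈ B, b ≠ c2 → b ≠ f0 → b = b1 := by
    intro b hb hbc hbf
    have := hAsub b hb hbc hbf hb1A
    simp only [Finset.mem_insert, Finset.mem_singleton] at this
    rcases this with h' | h'
    · exact absurd h' hb1c
    · exact h'.symm
  have hBsub : B ⊆ {c2, f0, b1} := by
    intro b hb
    rcases eq_or_ne b c2 with rfl | hbc
    · simp
    rcases eq_or_ne b f0 with rfl | hbf
    · simp
    simp [hbforce b hb hbc hbf]
  have hBeq : B = {c2, f0, b1} := by
    apply Finset.eq_of_subset_of_card_le hBsub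
    rw [cB]
    apply le_trans (Finset.card_insert_le _ _)
    have := Finset.card_insert_le f0 ({b1} : Finset α)
    simp at this ⊢; omega
  have hf0B : f0 ∈ B := by rw [hBeq]; simp
  have hc2F : c2 ∈ F := by
    by_contra hc2F
    obtain ⟨f1, hf1, hf1f0⟩ := pick1 F f0 (by omega)
    have hf1c : f1 ≠ c2 := fun h => hc2F (h ▸ hf1)
    have := hbforce f0 hf0B hf0c
    -- need: every b ∈ B, b ≠ c2, b ≠ f1 → forced to a single value; use f0 as b with f1 as f
    have hAsub' : A ⊆ {c2, f0} := by
      intro a ha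
      rcases eq_or_ne a f0 with rfl | haf
      · simp
      · simp [h f1 hf1 hf1c f0 hf0B hf0c (Ne.symm hf1f0) a ha haf]
    have : b1 ∈ ({c2, f0} : Finset α) := hAsub' hb1A
    simp only [Finset.mem_insert, Finset.mem_singleton] at this
    rcases this with h' | h'
    · exact hb1c h'
    · exact hb1f h'
  have hFeq : F = {c2, f0} := by
    symm
    apply Finset.eq_of_subset_of_card_le
    · intro x hx
      simp only [Finset.mem_insert, Finset.mem_singleton] at hx
      rcases hx with rfl | rfl
      · exact hc2F
      · exact hf0
    · rw [cF, Finset.card_pair (Ne.symm hf0c)]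
  have hf0b1 : f0 ≠ b1 := by
    intro h'
    rw [h'] at hBeq
    have : B.card ≤ 2 := by
      rw [hBeq]
      apply le_trans (Finset.card_insert_le _ _)
      simp
    omega
  exact ⟨f0, b1, Ne.symm hf0c, Ne.symm hb1c, hf0b1, hFeq, hBeq, hAeq⟩

end H2

section Main
variable {α : Type*} [DecidableEq α]

lemma finish3 (L : Fin 5 → Finset α) (L' : Finset α)
    (A B C D E F : Finset α)
    (hA : A ⊆ L 0) (hB : B ⊆ L 1) (hC : C ⊆ L 2) (hD : D ⊆ L 3) (hE : E ⊆ L 4) (hF : F ⊆ L')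
    (cD : D.card = 4) (cE : E.card = 2)
    (disjEF : ∀ x ∈ E, x ∉ F) (disjBE : ∀ x ∈ B, x ∉ E)
    (a b c2 f : α) (haA : a ∈ A) (hbB : b ∈ B) (hcC : c2 ∈ C) (hfF : f ∈ F) (hcE : c2 ∉ E)
    (hab : a ≠ b) (hac : a ≠ c2) (hbc : b ≠ c2) (hbf : b ≠ f) (hfc : f ≠ c2) :
    ∃ (φ : Fin 5 → α) (c : α), PathColoring L φ ∧ c ∈ L' ∧
      c ≠ φ 1 ∧ c ≠ φ 2 ∧ c ≠ φ 3 := by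
  have hbE : b ∉ E := disjBE b hbB
  have hfE : f ∉ E := fun h => disjEF f h hfF
  obtain ⟨e, he, d, hd, hdb, hdc, hdf, hde, hec⟩ := pick_ed D E cD cE b c2 f hbE hcE hfE
  refine ⟨![a, b, c2, d, e], f,
    buildPC L a b c2 d e (hA haA) (hB hbB) (hC hcC) (hD hd) (hE he)
      hab hac hbc (Ne.symm hdb) (Ne.symm hdc) (Ne.symm hec) hde,
    hF hfF, ?_, ?_, ?_⟩
  · show f ≠ b; exact Ne.symm hbf
  · show f ≠ c2; exact hfc
  · show f ≠ d; exact Ne.symm hdf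

theorem stmt10' (L : Fin 5 → Finset α) (L' : Finset α)
    (h1 : 2 ≤ (L 0).card) (h2 : 3 ≤ (L 1).card) (h3 : 3 ≤ (L 2).card)
    (h4 : 4 ≤ (L 3).card) (h5 : 2 ≤ (L 4).card) (h' : 2 ≤ L'.card) :
    ∃ (φ : Fin 5 → α) (c : α), PathColoring L φ ∧ c ∈ L' ∧
      c ≠ φ 1 ∧ c ≠ φ 2 ∧ c ≠ φ 3 := by
  obtain ⟨A, hA, cA⟩ := Finset.exists_subset_card_eq h1
  obtain ⟨B, hB, cB⟩ := Finset.exists_subset_card_eq h2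
  obtain ⟨C, hC, cC⟩ := Finset.exists_subset_card_eq h3
  obtain ⟨D, hD, cD⟩ := Finset.exists_subset_card_eq h4
  obtain ⟨E, hE, cE⟩ := Finset.exists_subset_card_eq h5
  obtain ⟨F, hF, cF⟩ := Finset.exists_subset_card_eq h'
  by_cases hEF : (E ∩ F).Nonempty
  · -- Case 1 : pick m ∈ E ∩ F, use φ4 = color = m
    obtain ⟨m, hm⟩ := hEF
    have hmE : m ∈ E := (Finset.mem_inter.mp hm).1
    have hmF : m ∈ F := (Finset.mem_inter.mp hm).2
    have cBe : 2 ≤ (B.erase m).card := by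
      have := Finset.pred_card_le_card_erase (s := B) (a := m); omega
    have cCe : 2 ≤ (C.erase m).card := by
      have := Finset.pred_card_le_card_erase (s := C) (a := m); omega
    rcases triangle A (B.erase m) (C.erase m) cA cBe cCe with
      ⟨a, ha, b, hb, c2, hc2, hab, hac, hbc⟩ | ⟨hXY, hXZ⟩
    · -- 1a : triangle colorable
      have hbB : b ∈ B := Finset.mem_of_mem_erase hb
      have hbm : b ≠ m := Finset.ne_of_mem_erase hb
      have hcB : c2 ∈ C := Finset.mem_of_mem_erase hc2
      have hcm : c2 ≠ m := Finset.ne_of_mem_erase hc2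
      obtain ⟨d, hd, hdm, hdb, hdc⟩ := pick3 D m b c2 (by omega)
      exact ⟨![a, b, c2, d, m], m,
        buildPC L a b c2 d m (hA ha) (hB hbB) (hC hcB) (hD hd) (hE hmE)
          hab hac hbc (Ne.symm hdb) (Ne.symm hdc) hcm hdm,
        hF hmF, Ne.symm hbm, Ne.symm hcm, Ne.symm hdm⟩
    · -- 1b : A = B.erase m = C.erase m
      have hmB : m ∈ B := by
        by_contra hmB
        rw [Finset.erase_eq_of_notMem hmB] at hXY
        rw [← hXY] at cB; omega
      obtain ⟨g, hg, hgm⟩ := pick1 F m (by omega)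
      obtain ⟨c2, hc2A, hc2g⟩ := pick1 A g (by omega)
      obtain ⟨a, haA, hac⟩ := pick1 A c2 (by omega)
      obtain ⟨d, hd, hdm, hdc, hdg⟩ := pick3 D m c2 g (by omega)
      have ham : a ≠ m := by
        have : a ∈ B.erase m := hXY ▸ haA
        exact Finset.ne_of_mem_erase this
      have hcm : c2 ≠ m := by
        have : c2 ∈ B.erase m := hXY ▸ hc2A
        exact Finset.ne_of_mem_erase this
      have hcC2 : c2 ∈ C := by
        have : c2 ∈ C.erase m := hXZ ▸ hc2A
        exact Finset.mem_of_mem_erase this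
      exact ⟨![a, m, c2, d, m], g,
        buildPC L a m c2 d m (hA haA) (hB hmB) (hC hcC2) (hD hd) (hE hmE)
          ham hac (Ne.symm hcm) (Ne.symm hdm) (Ne.symm hdc) hcm hdm,
        hF hg, hgm, Ne.symm hc2g, Ne.symm hdg⟩
  · have disjEF : ∀ x ∈ E, x ∉ F := fun x hx hx' => hEF ⟨x, Finset.mem_inter.mpr ⟨hx, hx'⟩⟩
    by_cases hBE : (B ∩ E).Nonempty
    · -- Case 2 : m ∈ B ∩ E, use φ1 = φ4 = m
      obtain ⟨m, hm⟩ := hBE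
      have hmB : m ∈ B := (Finset.mem_inter.mp hm).1
      have hmE : m ∈ E := (Finset.mem_inter.mp hm).2
      have hmF : m ∉ F := disjEF m hmE
      obtain ⟨a, haA, ham⟩ := pick1 A m (by omega)
      obtain ⟨c2, hcC, hcm, hca⟩ := pick2 C m a (by omega)
      obtain ⟨f, hfF, hfc⟩ := pick1 F c2 (by omega)
      obtain ⟨d, hd, hdm, hdc, hdf⟩ := pick3 D m c2 f (by omega)
      exact ⟨![a, m, c2, d, m], f,
        buildPC L a m c2 d m (hA haA) (hB hmB) (hC hcC) (hD hd) (hE hmE)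
          ham (Ne.symm hca) (Ne.symm hcm) (Ne.symm hdm) (Ne.symm hdc) hcm hdm,
        hF hfF, (by show f ≠ m; exact fun h => hmF (h ▸ hfF)), hfc, Ne.symm hdf⟩
    · -- Case 3
      have disjBE : ∀ x ∈ B, x ∉ E := fun x hx hx' => hBE ⟨x, Finset.mem_inter.mpr ⟨hx, hx'⟩⟩
      obtain ⟨c2, hcC, hcE⟩ := pick_avoid C E (by omega)
      rcases attempt A B F cA cB cF c2 with
        ⟨f, hfF, hfc, b, hbB, hbc, hbf, a, haA, hab, hac⟩ | ⟨g, b1, hc2g, hc2b1, hgb1, hFeq, hBeq, hAeq⟩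
      · exact finish3 L L' A B C D E F hA hB hC hD hE hF cD cE disjEF disjBE
          a b c2 f haA hbB hcC hfF hcE hab hac hbc hbf hfc
      · by_cases hC' : ∃ c' ∈ C, c' ∉ E ∧ c' ≠ c2
        · obtain ⟨c', hc'C, hc'E, hc'c2⟩ := hC'
          rcases attempt A B F cA cB cF c' with
            ⟨f, hfF, hfc, b, hbB, hbc, hbf, a, haA, hab, hac⟩ |
            ⟨g', b1', _, _, _, hFeq', hBeq', hAeq'⟩
          · exact finish3 L L' A B C D E F hA hB hC hD hE hF cD cE disjEF disjBE
              a b c' f haA hbB hc'C hfF hc'E hab hac hbc hbf hfc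
          · exfalso
            have hc'F : c' ∈ F := by rw [hFeq']; simp
            have hc'A : c' ∈ A := by rw [hAeq']; simp
            rw [hFeq] at hc'F
            rw [hAeq] at hc'A
            simp only [Finset.mem_insert, Finset.mem_singleton] at hc'F hc'A
            rcases hc'F with h1 | h1
            · exact hc'c2 h1
            rcases hc'A with h2 | h2
            · exact hc'c2 h2
            exact hgb1 (h1 ▸ h2 ▸ rfl)
        · -- C ⊆ insert c2 E, hence C = {c2, e1, e2}
          push_neg at hC'
          have hCsub : C ⊆ insert c2 E := by
            intro x hx
            by_cases hxE : x ∈ E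
            · exact Finset.mem_insert_of_mem hxE
            · rw [hC' x hx hxE]; exact Finset.mem_insert_self _ _
          have hCeq : C = insert c2 E := by
            apply Finset.eq_of_subset_of_card_le hCsub
            rw [cC]; apply le_trans (Finset.card_insert_le _ _); omega
          obtain ⟨e1, he1, e2, he2, hne⟩ := Finset.one_lt_card.mp (by omega : 1 < E.card)
          have he1C : e1 ∈ C := by rw [hCeq]; exact Finset.mem_insert_of_mem he1
          have hgB : g ∈ B := by rw [hBeq]; simp
          have hb1B : b1 ∈ B := by rw [hBeq]; simp
          have hgF : g ∈ F := by rw [hFeq]; simp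
          have hc2F : c2 ∈ F := by rw [hFeq]; simp
          have hc2A : c2 ∈ A := by rw [hAeq]; simp
          have hb1A : b1 ∈ A := by rw [hAeq]; simp
          have hgE : g ∉ E := fun h => disjEF g h hgF
          have hb1E : b1 ∉ E := disjBE b1 hb1B
          by_cases hDex : ∃ d ∈ D, d ≠ c2 ∧ d ≠ g ∧ d ≠ e1 ∧ d ≠ e2
          · obtain ⟨d, hd, hdc, hdg, hde1, hde2⟩ := hDex
            exact ⟨![b1, g, e1, d, e2], c2,
              buildPC L b1 g e1 d e2 (hA hb1A) (hB hgB) (hC he1C) (hD hd) (hE he2)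
                (Ne.symm hgb1) (fun h => hb1E (h ▸ he1)) (fun h => hgE (h ▸ he1))
                (Ne.symm hdg) (fun h => hde1 h.symm) hne hde2,
              hF hc2F, hc2g,
              (fun h => hcE (h ▸ he1)), Ne.symm hdc⟩
          · push_neg at hDex
            have hDsub : D ⊆ {c2, g, e1, e2} := by
              intro d hd
              rcases eq_or_ne d c2 with rfl | h1; · simp
              rcases eq_or_ne d g with rfl | h2; · simp
              rcases eq_or_ne d e1 with rfl | h3; · simp
              simp [hDex d hd h1 h2 h3]
            have hDeq : D = {c2, g, e1, e2} := by
              apply Finset.eq_of_subset_of_card_le hDsub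
              rw [cD]
              apply le_trans (Finset.card_insert_le _ _)
              apply Nat.succ_le_succ
              apply le_trans (Finset.card_insert_le _ _)
              apply Nat.succ_le_succ
              apply le_trans (Finset.card_insert_le _ _)
              simp
            have hgD : g ∈ D := by rw [hDeq]; simp
            exact ⟨![c2, b1, e1, g, e2], c2,
              buildPC L c2 b1 e1 g e2 (hA hc2A) (hB hb1B) (hC he1C) (hD hgD) (hE he2)
                hc2b1 (fun h => hcE (h ▸ he1)) (fun h => hb1E (h ▸ he1))
                (Ne.symm hgb1) (fun h => hgE (h.symm ▸ he1)) hne (fun h => hgE (h ▸ he2)),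
              hF hc2F, hc2b1, (fun h => hcE (h ▸ he1)), hc2g⟩

end Main


/-- Path `u₁u₂u₃u₄u₅` plus a pendant vertex `u₃'` adjacent to `u₃`, 2-distance
constraint; `u₃'` is at distance at most 2 exactly from `u₂, u₃, u₄`. -/
theorem stmt10 {α : Type*} (L : Fin 5 → Finset α) (L' : Finset α)
    (h1 : 2 ≤ (L 0).card) (h2 : 3 ≤ (L 1).card) (h3 : 3 ≤ (L 2).card)
    (h4 : 4 ≤ (L 3).card) (h5 : 2 ≤ (L 4).card) (h' : 2 ≤ L'.card) :
    ∃ (φ : Fin 5 → α) (c : α), PathColoring L φ ∧ c ∈ L' ∧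
      c ≠ φ 1 ∧ c ≠ φ 2 ∧ c ≠ φ 3 := by
  classical
  exact stmt10' L L' h1 h2 h3 h4 h5 h'
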